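/- If every block Gershgorin region of a block-partitioned matrix M lies in the open left half-plane, i.e., for each i the set {λ ∈ C : ||(M_{ii} - λI)^{-1}||^{-1} ≤ Σ_{j≠i}||M_{ij}||} ∪ spectrum(M_{ii}) is contained in {λ : Re λ < 0}, then M is Hurwitz. -/

import Mathlib

/-- The operator norm on `n×n` complex matrices induced by the `ℓ∞` vector norm:
the maximal absolute row sum. -/
noncomputable def mnorm {n : ℕ} (A : Matrix (Fin n) (Fin n) ℂ) : ℝ :=
  ⨆ i : Fin n, ∑ j : Fin n, ‖A i j‖

/-- `‖A⁻¹‖⁻¹`, with the convention that it is `0` when `A` is singular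
(Mathlib's matrix inverse is `0` on singular matrices, and `(0:ℝ)⁻¹ = 0`). -/
noncomputable def mlow {n : ℕ} (A : Matrix (Fin n) (Fin n) ℂ) : ℝ :=
  (mnorm A⁻¹)⁻¹

/-! Let `v` be an eigenvector of `M` for `μ` and let `i` be the block containing a coordinate of
`v` of largest modulus. Block row `i` of `M v = μ v` reads
`(M_ii - μ I) v_i = -∑_{j ≠ i} M_ij v_j`, and the right-hand side has `ℓ∞` norm at most
`(∑_{j ≠ i} ‖M_ij‖) ‖v_i‖∞`. Hence `‖(M_ii - μ I)⁻¹‖⁻¹ ≤ ∑_{j ≠ i} ‖M_ij‖`, i.e. `μ` lies in the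
`i`-th block Gershgorin region, which lies in the open left half-plane. -/

open Matrix

section RowSumNorm

variable {n : ℕ}

lemma mnorm_nonneg (A : Matrix (Fin n) (Fin n) ℂ) : 0 ≤ mnorm A :=
  Real.iSup_nonneg fun _ => Finset.sum_nonneg fun _ _ => norm_nonneg _

@[simp]
lemma mnorm_zero : mnorm (0 : Matrix (Fin n) (Fin n) ℂ) = 0 := by
  simp [mnorm]

lemma sum_norm_le_mnorm (A : Matrix (Fin n) (Fin n) ℂ) (a : Fin n) :
    ∑ j, ‖A a j‖ ≤ mnorm A :=
  le_ciSup (f := fun i => ∑ j, ‖A i j‖) (Set.finite_range _).bddAbove a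

lemma norm_mulVec_apply_le {x : Fin n → ℂ} {c : ℝ} (hc : 0 ≤ c) (hx : ∀ j, ‖x j‖ ≤ c)
    (A : Matrix (Fin n) (Fin n) ℂ) (a : Fin n) :
    ‖(A *ᵥ x) a‖ ≤ mnorm A * c :=
  calc ‖(A *ᵥ x) a‖ = ‖∑ j, A a j * x j‖ := rfl
    _ ≤ ∑ j, ‖A a j‖ * c := by
        refine (norm_sum_le _ _).trans (Finset.sum_le_sum fun j _ => ?_)
        rw [norm_mul]
        exact mul_le_mul_of_nonneg_left (hx j) (norm_nonneg _)
    _ = (∑ j, ‖A a j‖) * c := (Finset.sum_mul _ _ _).symm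
    _ ≤ mnorm A * c := mul_le_mul_of_nonneg_right (sum_norm_le_mnorm A a) hc

lemma norm_sum_mulVec_apply_le {ι : Type*} (s : Finset ι) (A : ι → Matrix (Fin n) (Fin n) ℂ)
    {x : ι → Fin n → ℂ} {c : ℝ} (hc : 0 ≤ c) (hx : ∀ j b, ‖x j b‖ ≤ c) (a : Fin n) :
    ‖(∑ j ∈ s, A j *ᵥ x j) a‖ ≤ (∑ j ∈ s, mnorm (A j)) * c :=
  calc ‖(∑ j ∈ s, A j *ᵥ x j) a‖ = ‖∑ j ∈ s, (A j *ᵥ x j) a‖ := by rw [Finset.sum_apply]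
    _ ≤ ∑ j ∈ s, mnorm (A j) * c :=
        (norm_sum_le _ _).trans (Finset.sum_le_sum fun j _ => norm_mulVec_apply_le hc (hx j) _ a)
    _ = (∑ j ∈ s, mnorm (A j)) * c := (Finset.sum_mul _ _ _).symm

lemma mlow_mul_norm_le {A : Matrix (Fin n) (Fin n) ℂ} {w : Fin n → ℂ} {d : ℝ}
    (hAw : ∀ a, ‖(A *ᵥ w) a‖ ≤ d) (a₀ : Fin n) :
    mlow A * ‖w a₀‖ ≤ d := by
  have hd : 0 ≤ d := (norm_nonneg _).trans (hAw a₀)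
  by_cases hA : IsUnit A.det
  · have hw : ‖w a₀‖ ≤ mnorm A⁻¹ * d := by
      have := norm_mulVec_apply_le hd hAw A⁻¹ a₀
      rwa [mulVec_mulVec, nonsing_inv_mul A hA, one_mulVec] at this
    rcases (mnorm_nonneg A⁻¹).eq_or_lt with hN | hN
    · simp [mlow, ← hN, hd]
    · calc mlow A * ‖w a₀‖ ≤ (mnorm A⁻¹)⁻¹ * (mnorm A⁻¹ * d) :=
            mul_le_mul_of_nonneg_left hw (inv_nonneg.2 hN.le)
        _ = d := inv_mul_cancel_left₀ hN.ne' d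
  · simp [mlow, nonsing_inv_apply_not_isUnit A hA, hd]

end RowSumNorm

section Blocks

variable {ι m R : Type*} [Fintype ι] [DecidableEq ι] [Fintype m] [DecidableEq m] [CommRing R]

def Matrix.block (M : Matrix (ι × m) (ι × m) R) (i j : ι) : Matrix m m R :=
  of fun a b => M (i, a) (j, b)

lemma Matrix.block_sub_smul_mulVec_eq {M : Matrix (ι × m) (ι × m) R} {μ : R}
    {v : ι × m → R} (hv : M *ᵥ v = μ • v) (i : ι) :
    (M.block i i - μ • 1) *ᵥ (fun a => v (i, a))
      = -∑ j ∈ Finset.univ.erase i, M.block i j *ᵥ fun b => v (j, b) := by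
  ext a
  have hrow : ∑ j, (M.block i j *ᵥ fun b => v (j, b)) a = μ * v (i, a) := by
    simpa [mulVec, dotProduct, Fintype.sum_prod_type, block] using congrFun hv (i, a)
  rw [← Finset.add_sum_erase _ _ (Finset.mem_univ i)] at hrow
  simp only [sub_mulVec, smul_mulVec, one_mulVec, Pi.sub_apply, Pi.smul_apply, smul_eq_mul,
    Pi.neg_apply, Finset.sum_apply]
  linear_combination hrow

end Blocks

lemma Matrix.exists_mulVec_eq_smul_of_mem_spectrum {ι K : Type*} [Fintype ι] [DecidableEq ι]
    [Field K] {M : Matrix ι ι K} {μ : K} (hμ : μ ∈ spectrum K M) : ∃ v ≠ 0, M *ᵥ v = μ • v := by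
  rw [← spectrum_toLin', ← Module.End.hasEigenvalue_iff_mem_spectrum] at hμ
  obtain ⟨v, hv⟩ := hμ.exists_hasEigenvector
  exact ⟨v, hv.2, by simpa using hv.apply_eq_smul⟩

/-- If every block Gershgorin region of a block-partitioned complex
matrix `M` lies in the open left half-plane, i.e. for each block row `i` the set
`{λ : ‖(M_{ii} - λI)⁻¹‖⁻¹ ≤ Σ_{j ≠ i} ‖M_{ij}‖} ∪ spectrum(M_{ii})` is contained in
`{λ : Re λ < 0}`, then `M` is Hurwitz (all its eigenvalues have negative real part). -/
theorem stmt10 {k n : ℕ} (M : Matrix (Fin k × Fin n) (Fin k × Fin n) ℂ)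
    (h : ∀ (i : Fin k) (lam : ℂ),
      (lam ∈ spectrum ℂ (fun a b : Fin n => M (i, a) (i, b)) ∨
        mlow ((Matrix.of fun a b : Fin n => M (i, a) (i, b))
            - lam • (1 : Matrix (Fin n) (Fin n) ℂ))
          ≤ ∑ j ∈ Finset.univ.erase i, mnorm (fun a b : Fin n => M (i, a) (j, b))) →
      lam.re < 0) :
    ∀ μ ∈ spectrum ℂ M, μ.re < 0 := by
  intro μ hμ
  obtain ⟨v, hv0, hv⟩ := exists_mulVec_eq_smul_of_mem_spectrum hμ
  obtain ⟨q, hq⟩ := Function.ne_iff.1 hv0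
  have : Nonempty (Fin k × Fin n) := ⟨q⟩
  obtain ⟨⟨i, a₀⟩, hmax⟩ := Finite.exists_max fun p => ‖v p‖
  have hpos : 0 < ‖v (i, a₀)‖ := (norm_pos_iff.2 hq).trans_le (hmax q)
  have hbound : ∀ a, ‖((M.block i i - μ • 1) *ᵥ fun b => v (i, b)) a‖
      ≤ (∑ j ∈ Finset.univ.erase i, mnorm (M.block i j)) * ‖v (i, a₀)‖ := fun a => by
    rw [block_sub_smul_mulVec_eq hv, Pi.neg_apply, norm_neg]
    exact norm_sum_mulVec_apply_le _ _ (norm_nonneg _) (fun j b => hmax (j, b)) a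
  exact h i μ (Or.inr (le_of_mul_le_mul_right (mlow_mul_norm_le hbound a₀) hpos))
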